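/- arXiv:1011.2234 — 2 statements merged into one kernel-verified Lean document; each statement's English description precedes it below -/
import Mathlib

section
/- Suppose each column of X is standardized so that ‖x_j‖₂ = 1 for all j, and let λ_max = max_j |x_j^T y|. Then λ_max ≤ ‖y‖₂, and consequently for every λ with 0 < λ ≤ λ_max the SAFE threshold is no larger than the strong-rule threshold: λ − ‖y‖₂ (λ_max − λ)/λ_max ≤ 2λ − λ_max. Hence in the standardized case the SAFE discarding rule is always weaker than the basic strong rule. -/
open Finset

/- Cauchy–Schwarz gives `|x_jᵀ y| ≤ ‖x_j‖‖y‖ = ‖y‖` for each unit column, hence `λ_max ≤ ‖y‖`.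
Then `‖y‖(λ_max − λ)/λ_max ≥ λ_max − λ`, which is exactly the comparison of the two thresholds. -/

theorem Real.abs_sum_mul_le_sqrt_mul_sqrt {ι : Type*} (s : Finset ι) (f g : ι → ℝ) :
    |∑ i ∈ s, f i * g i| ≤ √(∑ i ∈ s, f i ^ 2) * √(∑ i ∈ s, g i ^ 2) := by
  rw [← Real.sqrt_sq_eq_abs, ← Real.sqrt_mul (sum_nonneg fun _ _ ↦ sq_nonneg _)]
  exact Real.sqrt_le_sqrt (sum_mul_sq_le_sq_mul_sq s f g)

theorem sub_mul_sub_div_le_two_mul_sub {lam M r : ℝ} (hM : 0 < M) (hlam : lam ≤ M)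
    (hr : M ≤ r) : lam - r * (M - lam) / M ≤ 2 * lam - M := by
  have : M - lam ≤ r * (M - lam) / M :=
    calc M - lam = M * (M - lam) / M := by field_simp
      _ ≤ r * (M - lam) / M := by gcongr
  linarith

/-- For standardized predictors (`‖x_j‖₂ = 1` for all `j`), `λ_max ≤ ‖y‖₂`, and hence
for every `0 < λ ≤ λ_max` the SAFE threshold is no larger than the strong-rule
threshold: `λ − ‖y‖₂(λ_max − λ)/λ_max ≤ 2λ − λ_max`. -/
theorem safe_threshold_le_strong_threshold {N p : ℕ} (X : Matrix (Fin N) (Fin p) ℝ)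
    (y : Fin N → ℝ) (lmax : ℝ)
    (hstd : ∀ j : Fin p, Real.sqrt (∑ i, X i j ^ 2) = 1)
    (hlmax : IsGreatest (Set.range fun j : Fin p => |∑ i, X i j * y i|) lmax) :
    lmax ≤ Real.sqrt (∑ i, y i ^ 2) ∧
      ∀ lam : ℝ, 0 < lam → lam ≤ lmax →
        lam - Real.sqrt (∑ i, y i ^ 2) * (lmax - lam) / lmax ≤ 2 * lam - lmax := by
  obtain ⟨j, rfl⟩ := hlmax.1
  have hle : |∑ i, X i j * y i| ≤ Real.sqrt (∑ i, y i ^ 2) := by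
    simpa only [hstd j, one_mul] using Real.abs_sum_mul_le_sqrt_mul_sqrt univ (X · j) y
  exact ⟨hle, fun lam hlam hlam_le ↦
    sub_mul_sub_div_le_two_mul_sub (hlam.trans_le hlam_le) hlam_le hle⟩
end

section
/- (Soundness of the basic strong rule under the unit slope condition.) Let λ_max = max_j |x_j^T y| and let β̂ : (0,∞) → ℝ^p be a solution path, i.e., for each μ > 0 the vector β̂(μ) minimizes the lasso objective (1/2)‖y − Xβ‖₂² + μ‖β‖₁, and define c_j(μ) = x_j^T(y − Xβ̂(μ)). Let 0 < λ ≤ λ_max. If the function μ ↦ c_j(μ) is 1-Lipschitz on [λ, λ_max] and |x_j^T y| < 2λ − λ_max, then β̂(λ)_j = 0. -/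
/-! At `λ_max` the zero vector is a lasso solution, and all lasso solutions have the same fit
`Xβ̂`, because the squared loss is strictly convex in `Xβ`; hence `c_j(λ_max) = x_jᵀy`. The unit
slope condition then gives `|c_j(λ)| ≤ |x_jᵀy| + (λ_max − λ) < λ`, while shrinking a nonzero
coordinate `β̂(λ)_j` towards `0` shows that `|c_j(λ)| ≥ λ` (a KKT condition). -/

open Finset

noncomputable def lassoObj {N p : ℕ} (X : Matrix (Fin N) (Fin p) ℝ) (y : Fin N → ℝ)
    (lam : ℝ) (b : Fin p → ℝ) : ℝ :=
  (1 / 2) * ∑ i, (y i - X.mulVec b i) ^ 2 + lam * ∑ j, |b j|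

open Filter Topology Matrix

section Lasso

variable {N p : ℕ} (X : Matrix (Fin N) (Fin p) ℝ) (y : Fin N → ℝ)

def IsLassoSolution (mu : ℝ) (b : Fin p → ℝ) : Prop :=
  ∀ b', lassoObj X y mu b ≤ lassoObj X y mu b'

def lassoCorr (b : Fin p → ℝ) (j : Fin p) : ℝ :=
  ∑ i, X i j * (y i - (X *ᵥ b) i)

lemma lassoCorr_eq_of_mulVec_eq {b b' : Fin p → ℝ} (h : X *ᵥ b = X *ᵥ b') (j : Fin p) :
    lassoCorr X y b j = lassoCorr X y b' j := by
  simp only [lassoCorr, h]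

lemma lassoCorr_zero (j : Fin p) : lassoCorr X y 0 j = ∑ i, X i j * y i := by
  simp [lassoCorr]

lemma lassoObj_update (mu : ℝ) (b : Fin p → ℝ) (j : Fin p) (v : ℝ) :
    lassoObj X y mu (Function.update b j v) =
      lassoObj X y mu b - (v - b j) * lassoCorr X y b j
        + (v - b j) ^ 2 * (∑ i, X i j ^ 2) / 2 + mu * (|v| - |b j|) := by
  have hupd : Function.update b j v = b + Pi.single j (v - b j) := by
    ext k; rcases eq_or_ne k j with rfl | hk <;> simp [*]
  have hfit : ∀ i, (X *ᵥ Function.update b j v) i = (X *ᵥ b) i + (v - b j) * X i j := by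
    intro i; simp [hupd, mulVec_add, mul_comm]
  have habs : ∀ k,
      |Function.update b j v k| = |b k| + Pi.single (M := fun _ => ℝ) j (|v| - |b j|) k := by
    intro k; rcases eq_or_ne k j with rfl | hk <;> simp [*]
  simp only [lassoObj, lassoCorr, hfit, habs, sum_add_distrib, sum_pi_single']
  have hsq : ∀ i, (y i - ((X *ᵥ b) i + (v - b j) * X i j)) ^ 2 = (y i - (X *ᵥ b) i) ^ 2
      - 2 * (v - b j) * (X i j * (y i - (X *ᵥ b) i)) + (v - b j) ^ 2 * X i j ^ 2 := by
    intro i; ring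
  simp only [hsq, sum_add_distrib, sum_sub_distrib, ← mul_sum, if_pos (mem_univ j)]
  ring

lemma isLassoSolution_zero {mu : ℝ} (h : ∀ k, |∑ i, X i k * y i| ≤ mu) :
    IsLassoSolution X y mu 0 := by
  intro b
  have hcross : ∑ i, y i * (X *ᵥ b) i = ∑ k, b k * ∑ i, X i k * y i := by
    simp only [mulVec, dotProduct, mul_sum]
    rw [sum_comm]
    exact sum_congr rfl fun _ _ => sum_congr rfl fun _ _ => by ring
  have hbound : ∑ k, b k * ∑ i, X i k * y i ≤ mu * ∑ k, |b k| := by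
    rw [mul_sum]
    refine sum_le_sum fun k _ => ?_
    calc b k * ∑ i, X i k * y i ≤ |b k| * |∑ i, X i k * y i| :=
          (le_abs_self _).trans (abs_mul _ _).le
      _ ≤ |b k| * mu := by gcongr; exact h k
      _ = mu * |b k| := mul_comm _ _
  have hexpand : ∑ i, (y i - (X *ᵥ b) i) ^ 2
      = ∑ i, y i ^ 2 - 2 * ∑ i, y i * (X *ᵥ b) i + ∑ i, (X *ᵥ b) i ^ 2 := by
    rw [mul_sum, ← sum_sub_distrib, ← sum_add_distrib]
    exact sum_congr rfl fun _ _ => by ring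
  have hfit_sq : 0 ≤ ∑ i, (X *ᵥ b) i ^ 2 := sum_nonneg fun _ _ => sq_nonneg _
  simp only [lassoObj, mulVec_zero, Pi.zero_apply, sub_zero, abs_zero, sum_const_zero, mul_zero,
    add_zero]
  rw [hexpand]
  linarith

lemma lassoObj_midpoint_add_le {mu : ℝ} (hmu : 0 ≤ mu) (b b' : Fin p → ℝ) :
    lassoObj X y mu ((2 : ℝ)⁻¹ • (b + b')) + (1 / 8) * ∑ i, ((X *ᵥ b) i - (X *ᵥ b') i) ^ 2
      ≤ (lassoObj X y mu b + lassoObj X y mu b') / 2 := by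
  have hquad : ∑ i, (y i - (X *ᵥ ((2 : ℝ)⁻¹ • (b + b'))) i) ^ 2
      + (1 / 4) * ∑ i, ((X *ᵥ b) i - (X *ᵥ b') i) ^ 2
      = (∑ i, (y i - (X *ᵥ b) i) ^ 2 + ∑ i, (y i - (X *ᵥ b') i) ^ 2) / 2 := by
    rw [mul_sum, ← sum_add_distrib, ← sum_add_distrib, sum_div]
    refine sum_congr rfl fun i _ => ?_
    simp only [mulVec_smul, mulVec_add, Pi.smul_apply, Pi.add_apply, smul_eq_mul]
    ring
  have hnorm : ∑ k, |((2 : ℝ)⁻¹ • (b + b')) k| ≤ (∑ k, |b k| + ∑ k, |b' k|) / 2 := by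
    rw [← sum_add_distrib, sum_div]
    gcongr with k
    simp only [Pi.smul_apply, Pi.add_apply, smul_eq_mul, abs_mul, abs_inv, abs_two]
    linarith [abs_add_le (b k) (b' k)]
  simp only [lassoObj]
  linarith [mul_le_mul_of_nonneg_left hnorm hmu]

variable {X y}

lemma IsLassoSolution.mulVec_eq {mu : ℝ} (hmu : 0 ≤ mu) {b b' : Fin p → ℝ}
    (hb : IsLassoSolution X y mu b) (hb' : IsLassoSolution X y mu b') : X *ᵥ b = X *ᵥ b' := by
  have hgap : ∑ i, ((X *ᵥ b) i - (X *ᵥ b') i) ^ 2 = 0 :=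
    le_antisymm
      (by linarith [lassoObj_midpoint_add_le X y hmu b b', hb ((2 : ℝ)⁻¹ • (b + b')), hb' b])
      (sum_nonneg fun _ _ => sq_nonneg _)
  ext i
  have hi := (sum_eq_zero_iff_of_nonneg fun _ _ => sq_nonneg _).1 hgap i (mem_univ i)
  exact sub_eq_zero.1 (pow_eq_zero_iff two_ne_zero |>.1 hi)

lemma IsLassoSolution.mul_abs_le {mu : ℝ} {b : Fin p → ℝ} (hb : IsLassoSolution X y mu b)
    (j : Fin p) : mu * |b j| ≤ b j * lassoCorr X y b j := by
  set c := lassoCorr X y b j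
  set C := b j ^ 2 * (∑ i, X i j ^ 2) / 2
  have hshrink : ∀ ε ∈ Set.Ioo (0 : ℝ) 1, mu * |b j| ≤ b j * c + ε * C := by
    rintro ε ⟨hε0, hε1⟩
    have h := hb (Function.update b j ((1 - ε) * b j))
    rw [lassoObj_update, abs_mul, abs_of_pos (sub_pos.2 hε1)] at h
    have hε : 0 ≤ ε * (b j * c + ε * C - mu * |b j|) := by linear_combination h
    exact sub_nonneg.1 ((mul_nonneg_iff_of_pos_left hε0).1 hε)
  have hlim : Tendsto (fun ε => b j * c + ε * C) (𝓝[>] 0) (𝓝 (b j * c)) :=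
    tendsto_nhdsWithin_of_tendsto_nhds
      ((continuous_const.add (continuous_id.mul continuous_const)).tendsto' _ _ (by simp))
  exact ge_of_tendsto hlim (by filter_upwards [Ioo_mem_nhdsGT one_pos] using hshrink)

lemma IsLassoSolution.eq_zero_of_abs_lassoCorr_lt {mu : ℝ} {b : Fin p → ℝ} {j : Fin p}
    (hb : IsLassoSolution X y mu b) (h : |lassoCorr X y b j| < mu) : b j = 0 := by
  by_contra hne
  have hcorr : b j * lassoCorr X y b j ≤ |b j| * |lassoCorr X y b j| :=
    (le_abs_self _).trans (abs_mul _ _).le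
  linarith [hb.mul_abs_le j, mul_lt_mul_of_pos_left h (abs_pos.2 hne)]

end Lasso

/-- Soundness of the basic strong rule under the unit slope condition: if `β̂(μ)` is a
lasso solution path, `c_j(μ) = x_j^T(y − Xβ̂(μ))` is 1-Lipschitz on `[λ, λ_max]`, and
`|x_j^T y| < 2λ − λ_max`, then `β̂(λ)_j = 0`. -/
theorem basic_strong_rule_sound {N p : ℕ} (X : Matrix (Fin N) (Fin p) ℝ)
    (y : Fin N → ℝ) (lmax : ℝ)
    (hlmax : IsGreatest (Set.range fun j : Fin p => |∑ i, X i j * y i|) lmax)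
    (bhat : ℝ → Fin p → ℝ)
    (hpath : ∀ mu : ℝ, 0 < mu →
      ∀ b : Fin p → ℝ, lassoObj X y mu (bhat mu) ≤ lassoObj X y mu b)
    (lam : ℝ) (hlam : 0 < lam) (hle : lam ≤ lmax) (j : Fin p)
    (hlip : ∀ a ∈ Set.Icc lam lmax, ∀ b ∈ Set.Icc lam lmax,
      |(∑ i, X i j * (y i - X.mulVec (bhat a) i)) -
        (∑ i, X i j * (y i - X.mulVec (bhat b) i))| ≤ |a - b|)
    (hrule : |∑ i, X i j * y i| < 2 * lam - lmax) :
    bhat lam j = 0 := by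
  have hlmax_pos : 0 < lmax := hlam.trans_le hle
  have hzero : IsLassoSolution X y lmax 0 := isLassoSolution_zero X y fun k => hlmax.2 ⟨k, rfl⟩
  have hcorr_max : lassoCorr X y (bhat lmax) j = ∑ i, X i j * y i := by
    rw [lassoCorr_eq_of_mulVec_eq X y
      (IsLassoSolution.mulVec_eq hlmax_pos.le (hpath lmax hlmax_pos) hzero), lassoCorr_zero]
  have hcorr_lam : |lassoCorr X y (bhat lam) j| < lam := by
    have h := hlip lam ⟨le_rfl, hle⟩ lmax ⟨hle, le_rfl⟩
    change |lassoCorr X y (bhat lam) j - lassoCorr X y (bhat lmax) j| ≤ _ at h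
    rw [hcorr_max, abs_sub_comm lam, abs_of_nonneg (sub_nonneg.2 hle)] at h
    linarith [abs_sub_abs_le_abs_sub (lassoCorr X y (bhat lam) j) (∑ i, X i j * y i)]
  exact IsLassoSolution.eq_zero_of_abs_lassoCorr_lt (hpath lam hlam) hcorr_lam
end
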